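/- Let σ ∈ (0,1) and τ ∈ ℝ. For every multi-index β ∈ ℕ^d there is a constant C, depending only on d, σ, τ, β, such that for all ξ, η ∈ ℝ^d, | ∂_ξ^β ( e^{τ⟨ξ+η⟩^σ − τ⟨ξ⟩^σ} ) | ≤ C · ⟨ξ⟩^{−|β|} · ⟨η⟩^{2|β|} · e^{τ⟨ξ+η⟩^σ − τ⟨ξ⟩^σ}. -/

import Mathlib

open MeasureTheory Real
open scoped FourierTransform ENNReal

noncomputable section

/-- `ℝ^d` as a Euclidean space. -/
abbrev E (d : ℕ) := EuclideanSpace ℝ (Fin d)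

/-- The Japanese bracket `⟨ξ⟩ = (1 + |ξ|²)^{1/2}`. -/
def jap {d : ℕ} (ξ : E d) : ℝ := Real.sqrt (1 + ‖ξ‖ ^ 2)

/-- Partial derivative in the `i`-th coordinate direction. -/
def pder {d : ℕ} {F : Type*} [NormedAddCommGroup F] [NormedSpace ℝ F]
    (i : Fin d) (f : E d → F) : E d → F :=
  fun x => fderiv ℝ f x (EuclideanSpace.single i 1)

/-- Multi-index partial derivative `∂^α`. -/
def mpder {d : ℕ} {F : Type*} [NormedAddCommGroup F] [NormedSpace ℝ F]
    (α : Fin d → ℕ) (f : E d → F) : E d → F :=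
  (List.finRange d).foldr (fun i g => (pder i)^[α i] g) f

/-! Write `φ ξ = τ ⟨ξ⟩^σ`, a symbol of order `σ`. By the Leibniz rule and the chain rule for `exp`,
`∂^β e^{φ(ξ+η) - φ(ξ)} = v · e^{φ(ξ+η) - φ(ξ)}`, where `v` is a sum of products of differences
`f(ξ+η) - f(ξ)` of symbols `f` of order `σ - k`, `k ≥ 1`, the `k` adding up to `|β|`. Each such
difference is `O(⟨ξ⟩^{-k} ⟨η⟩^{2k})`: by the mean value theorem it is at most `|η|` times the
supremum of `|∇f(ζ)| ≲ ⟨ζ⟩^{σ-k-1} ≤ ⟨ζ⟩^{-k}` over the segment `[ξ, ξ+η]`, and there Peetre's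
inequality gives `⟨ζ⟩^{-k} ≤ 2^{k/2} ⟨η⟩^k ⟨ξ⟩^{-k}`. -/

open Asymptotics

section

variable {d : ℕ}

lemma jap_sq (ξ : E d) : jap ξ ^ 2 = 1 + ‖ξ‖ ^ 2 := Real.sq_sqrt (by positivity)

lemma one_le_jap (ξ : E d) : 1 ≤ jap ξ := Real.one_le_sqrt.2 (by simp)

lemma jap_pos (ξ : E d) : 0 < jap ξ := one_pos.trans_le (one_le_jap ξ)

lemma jap_le_jap {ξ η : E d} (h : ‖ξ‖ ≤ ‖η‖) : jap ξ ≤ jap η := by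
  unfold jap; gcongr

lemma norm_le_jap (ξ : E d) : ‖ξ‖ ≤ jap ξ :=
  Real.le_sqrt_of_sq_le (by linarith)

lemma abs_apply_le_jap (ξ : E d) (i : Fin d) : |ξ i| ≤ jap ξ :=
  (PiLp.norm_apply_le ξ i).trans (norm_le_jap ξ)

lemma jap_rpow_eq (t : ℝ) (ξ : E d) : jap ξ ^ t = (1 + ‖ξ‖ ^ 2) ^ (t / 2) := by
  rw [jap, Real.sqrt_eq_rpow, ← Real.rpow_mul (by positivity)]
  ring_nf

lemma jap_le_sqrt_two_mul_jap_sub_mul_jap (ξ ζ : E d) :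
    jap ξ ≤ √2 * jap (ζ - ξ) * jap ζ := by
  have hξ : ‖ξ‖ ≤ ‖ζ‖ + ‖ζ - ξ‖ := by simpa using norm_sub_le ζ (ζ - ξ)
  -- `1 + (a + b) ^ 2 ≤ 2 * (1 + a ^ 2) * (1 + b ^ 2)`
  have hsq : jap ξ ^ 2 ≤ (√2 * jap (ζ - ξ) * jap ζ) ^ 2 := by
    rw [mul_pow, mul_pow, Real.sq_sqrt zero_le_two, jap_sq, jap_sq, jap_sq]
    nlinarith [norm_nonneg ξ, norm_nonneg (ζ - ξ), norm_nonneg ζ,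
      sq_nonneg (‖ζ - ξ‖ - ‖ζ‖), sq_nonneg (‖ζ - ξ‖ * ‖ζ‖)]
  have := jap_pos ζ
  have := jap_pos (ζ - ξ)
  exact (pow_le_pow_iff_left₀ (jap_pos ξ).le (by positivity) two_ne_zero).1 hsq

lemma jap_rpow_neg_le {k : ℝ} (hk : 0 ≤ k) (ξ ζ : E d) :
    jap ζ ^ (-k) ≤ (√2 * jap (ζ - ξ)) ^ k * jap ξ ^ (-k) := by
  have hξ := jap_pos ξ
  have hζ := jap_pos ζ
  have := jap_pos (ζ - ξ)
  rw [Real.rpow_neg hζ.le, Real.rpow_neg hξ.le, ← div_eq_mul_inv,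
    le_div_iff₀ (by positivity), ← div_eq_inv_mul, div_le_iff₀ (by positivity),
    ← Real.mul_rpow (by positivity) hζ.le]
  exact Real.rpow_le_rpow hξ.le (jap_le_sqrt_two_mul_jap_sub_mul_jap ξ ζ) hk

lemma hasFDerivAt_jap_rpow (t : ℝ) (ξ : E d) :
    HasFDerivAt (fun ξ => jap ξ ^ t) ((t * jap ξ ^ (t - 2)) • innerSL ℝ ξ) ξ := by
  have hw : HasFDerivAt (fun ξ : E d => 1 + ‖ξ‖ ^ 2) (2 • innerSL ℝ ξ) ξ := by
    simpa using ((hasFDerivAt_id ξ).norm_sq).const_add 1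
  simp only [jap_rpow_eq]
  refine (hw.rpow_const (p := t / 2) (Or.inl (by positivity))).congr_fderiv ?_
  ext v
  simp only [smul_apply, smul_eq_mul, nsmul_eq_mul]
  ring_nf

section PartialDerivatives

variable {F : Type*} [NormedAddCommGroup F] [NormedSpace ℝ F] {ξ : E d} (i : Fin d)

lemma HasFDerivAt.pder_eq {f : E d → F} {f' : E d →L[ℝ] F} (h : HasFDerivAt f f' ξ) :
    pder i f ξ = f' (EuclideanSpace.single i 1) := by
  rw [pder, h.fderiv]

lemma pder_add {f g : E d → F} (hf : DifferentiableAt ℝ f ξ) (hg : DifferentiableAt ℝ g ξ) :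
    pder i (fun x => f x + g x) ξ = pder i f ξ + pder i g ξ :=
  (hf.hasFDerivAt.add hg.hasFDerivAt).pder_eq i

lemma pder_sub {f g : E d → F} (hf : DifferentiableAt ℝ f ξ) (hg : DifferentiableAt ℝ g ξ) :
    pder i (fun x => f x - g x) ξ = pder i f ξ - pder i g ξ :=
  (hf.hasFDerivAt.sub hg.hasFDerivAt).pder_eq i

lemma pder_const (c : F) : pder i (fun _ : E d => c) = fun _ => 0 :=
  funext fun ξ => by simpa using (hasFDerivAt_const c ξ).pder_eq i

lemma pder_comp_add_right (f : E d → F) (η : E d) :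
    pder i (fun x => f (x + η)) ξ = pder i f (ξ + η) := by
  rw [pder, pder, fderiv_comp_add_right]

variable {f g : E d → ℝ}

lemma pder_const_mul (hf : DifferentiableAt ℝ f ξ) (c : ℝ) :
    pder i (fun x => c * f x) ξ = c * pder i f ξ :=
  (hf.hasFDerivAt.const_mul c).pder_eq i

lemma pder_mul (hf : DifferentiableAt ℝ f ξ) (hg : DifferentiableAt ℝ g ξ) :
    pder i (fun x => f x * g x) ξ = f ξ * pder i g ξ + g ξ * pder i f ξ :=
  (hf.hasFDerivAt.mul hg.hasFDerivAt).pder_eq i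

lemma pder_exp (hf : DifferentiableAt ℝ f ξ) :
    pder i (fun x => Real.exp (f x)) ξ = Real.exp (f ξ) * pder i f ξ :=
  hf.hasFDerivAt.exp.pder_eq i

lemma pder_apply (j : Fin d) : pder i (fun x : E d => x j) ξ = if j = i then 1 else 0 := by
  have h : HasFDerivAt (fun x : E d => x j) (EuclideanSpace.proj j : E d →L[ℝ] ℝ) ξ :=
    (EuclideanSpace.proj (𝕜 := ℝ) (ι := Fin d) j).hasFDerivAt
  simp [h.pder_eq i]

lemma pder_jap_rpow (t : ℝ) : pder i (fun x => jap x ^ t) ξ = t * (ξ i * jap ξ ^ (t - 2)) := by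
  rw [(hasFDerivAt_jap_rpow t ξ).pder_eq i]
  simp [EuclideanSpace.inner_single_right]
  ring

end PartialDerivatives

inductive IsSymbol : ℝ → (E d → ℝ) → Prop
  | jap_rpow (t : ℝ) : IsSymbol t fun ξ => jap ξ ^ t
  | apply (i : Fin d) : IsSymbol 1 fun ξ => ξ i
  | const_mul {m : ℝ} {f : E d → ℝ} (c : ℝ) : IsSymbol m f → IsSymbol m fun ξ => c * f ξ
  | add {m : ℝ} {f g : E d → ℝ} : IsSymbol m f → IsSymbol m g → IsSymbol m fun ξ => f ξ + g ξ
  | mul {m n : ℝ} {f g : E d → ℝ} :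
      IsSymbol m f → IsSymbol n g → IsSymbol (m + n) fun ξ => f ξ * g ξ

namespace IsSymbol

variable {m : ℝ} {f : E d → ℝ}

lemma isBigO (h : IsSymbol m f) : f =O[⊤] fun ξ => jap ξ ^ m := by
  induction h with
  | jap_rpow t => exact isBigO_refl _ _
  | apply i =>
    refine IsBigO.of_bound 1 (Filter.Eventually.of_forall fun ξ => ?_)
    simpa [abs_of_pos (jap_pos ξ)] using abs_apply_le_jap ξ i
  | const_mul c _ ih => exact ih.const_mul_left c
  | add _ _ ihf ihg => exact ihf.add ihg
  | mul _ _ ihf ihg =>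
    refine (ihf.mul ihg).congr_right fun ξ => ?_
    rw [Real.rpow_add (jap_pos ξ)]

lemma differentiable (h : IsSymbol m f) : Differentiable ℝ f := by
  induction h with
  | jap_rpow t => exact fun ξ => (hasFDerivAt_jap_rpow t ξ).differentiableAt
  | apply i => exact (EuclideanSpace.proj (𝕜 := ℝ) (ι := Fin d) i).differentiable
  | const_mul c _ ih => exact ih.const_mul c
  | add _ _ ihf ihg => exact ihf.add ihg
  | mul _ _ ihf ihg => exact ihf.mul ihg

lemma pder (h : IsSymbol m f) (i : Fin d) : IsSymbol (m - 1) (_root_.pder i f) := by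
  induction h with
  | jap_rpow t =>
    rw [funext fun ξ => pder_jap_rpow (ξ := ξ) i t]
    exact (by ring : 1 + (t - 2) = t - 1) ▸ ((apply i).mul (jap_rpow (t - 2))).const_mul t
  | apply j =>
    rw [funext fun ξ => pder_apply (ξ := ξ) i j]
    simpa using (jap_rpow (d := d) 0).const_mul (if j = i then (1 : ℝ) else 0)
  | const_mul c hf ih =>
    rw [funext fun ξ => pder_const_mul i (hf.differentiable ξ) c]
    exact ih.const_mul c
  | add hf hg ihf ihg =>
    convert ihf.add ihg using 1
    exact funext fun ξ => pder_add i (hf.differentiable ξ) (hg.differentiable ξ)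
  | @mul m n f g hf hg ihf ihg =>
    convert ((by ring : m + (n - 1) = m + n - 1) ▸ hf.mul ihg).add
      ((by ring : n + (m - 1) = m + n - 1) ▸ hg.mul ihf) using 1
    exact funext fun ξ => pder_mul i (hf.differentiable ξ) (hg.differentiable ξ)

end IsSymbol

lemma isBigO_fderiv_of_forall_pder {F : Type*} [NormedAddCommGroup F] [NormedSpace ℝ F]
    {f : E d → F} {g : E d → ℝ} {l : Filter (E d)} (h : ∀ i, pder i f =O[l] g) :
    fderiv ℝ f =O[l] g := by
  choose C hC using fun i => (h i).bound
  obtain ⟨K, -, hK⟩ := (EuclideanSpace.basisFun (Fin d) ℝ).toBasis.exists_opNorm_le (F := F)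
  refine IsBigO.of_bound (K * ∑ i, |C i|) ?_
  filter_upwards [Filter.eventually_all.2 hC] with ζ hζ
  rw [mul_assoc]
  refine hK (by positivity) fun i => ?_
  rw [OrthonormalBasis.coe_toBasis, EuclideanSpace.basisFun_apply]
  refine (hζ i).trans ?_
  gcongr
  exact (le_abs_self _).trans
    (Finset.single_le_sum (fun j _ => abs_nonneg (C j)) (Finset.mem_univ i))

lemma norm_sub_le_of_norm_fderiv_le_jap_rpow_neg {F : Type*} [NormedAddCommGroup F]
    [NormedSpace ℝ F] {f : E d → F} (hf : Differentiable ℝ f) {C k : ℝ} (hk : 0 ≤ k)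
    (hf' : ∀ ζ, ‖fderiv ℝ f ζ‖ ≤ C * jap ζ ^ (-k)) (ξ η : E d) :
    ‖f (ξ + η) - f ξ‖ ≤ C * √2 ^ k * jap ξ ^ (-k) * jap η ^ (k + 1) := by
  have hC : 0 ≤ C := nonneg_of_mul_nonneg_left ((norm_nonneg _).trans (hf' 0))
    (Real.rpow_pos_of_pos (jap_pos 0) _)
  have hseg : ∀ ζ ∈ segment ℝ ξ (ξ + η),
      ‖fderiv ℝ f ζ‖ ≤ C * √2 ^ k * jap ξ ^ (-k) * jap η ^ k := by
    rw [segment_eq_image']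
    rintro _ ⟨t, ht, rfl⟩
    have hjap : jap (t • (ξ + η - ξ)) ≤ jap η := by
      refine jap_le_jap ?_
      rw [add_sub_cancel_left, norm_smul, Real.norm_of_nonneg ht.1]
      exact mul_le_of_le_one_left (norm_nonneg η) ht.2
    calc ‖fderiv ℝ f (ξ + t • (ξ + η - ξ))‖
        ≤ C * ((√2 * jap (t • (ξ + η - ξ))) ^ k * jap ξ ^ (-k)) := by
          refine (hf' _).trans (mul_le_mul_of_nonneg_left ?_ hC)
          simpa using jap_rpow_neg_le hk ξ (ξ + t • (ξ + η - ξ))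
      _ ≤ C * ((√2 * jap η) ^ k * jap ξ ^ (-k)) := by
          have := jap_pos ξ
          have := jap_pos (t • (ξ + η - ξ))
          gcongr
      _ = C * √2 ^ k * jap ξ ^ (-k) * jap η ^ k := by
          rw [Real.mul_rpow (by positivity) (jap_pos η).le]
          ring
  calc ‖f (ξ + η) - f ξ‖ ≤ C * √2 ^ k * jap ξ ^ (-k) * jap η ^ k * ‖ξ + η - ξ‖ :=
        (convex_segment _ _).norm_image_sub_le_of_norm_fderiv_le (fun ζ _ => hf ζ) hseg
          (left_mem_segment _ _ _) (right_mem_segment _ _ _)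
    _ ≤ C * √2 ^ k * jap ξ ^ (-k) * jap η ^ k * jap η := by
        have := jap_pos ξ
        have := jap_pos η
        rw [add_sub_cancel_left]
        gcongr
        exact norm_le_jap η
    _ = C * √2 ^ k * jap ξ ^ (-k) * jap η ^ (k + 1) := by
        rw [Real.rpow_add_one (jap_pos η).ne']
        ring

lemma IsSymbol.isBigO_sub_comp_add {m k : ℝ} {f : E d → ℝ} (hf : IsSymbol m f) (hk : 1 ≤ k)
    (hmk : m + k ≤ 1) :
    (fun p : E d × E d => f (p.2 + p.1) - f p.2) =O[⊤]
      fun p => jap p.2 ^ (-k) * jap p.1 ^ (2 * k) := by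
  obtain ⟨C, hC0, hC⟩ := (isBigO_fderiv_of_forall_pder fun i => (hf.pder i).isBigO).exists_pos
  rw [isBigOWith_top] at hC
  have hf' : ∀ ζ, ‖fderiv ℝ f ζ‖ ≤ C * jap ζ ^ (-k) := fun ζ => by
    refine (hC ζ).trans ?_
    rw [Real.norm_of_nonneg (Real.rpow_pos_of_pos (jap_pos ζ) _).le]
    gcongr
    · exact one_le_jap ζ
    · linarith
  refine IsBigO.of_bound (C * √2 ^ k) (Filter.Eventually.of_forall fun p => ?_)
  have := jap_pos p.1
  have := jap_pos p.2
  calc ‖f (p.2 + p.1) - f p.2‖ ≤ C * √2 ^ k * jap p.2 ^ (-k) * jap p.1 ^ (k + 1) :=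
        norm_sub_le_of_norm_fderiv_le_jap_rpow_neg hf.differentiable (by linarith) hf' p.2 p.1
    _ ≤ C * √2 ^ k * jap p.2 ^ (-k) * jap p.1 ^ (2 * k) := by
        gcongr
        · exact one_le_jap p.1
        · linarith
    _ = C * √2 ^ k * ‖jap p.2 ^ (-k) * jap p.1 ^ (2 * k)‖ := by
        rw [Real.norm_of_nonneg (by positivity), mul_assoc]

inductive IsAmplitude (σ : ℝ) : ℕ → (E d → E d → ℝ) → Prop
  | zero (n : ℕ) : IsAmplitude σ n fun _ _ => 0
  | one : IsAmplitude σ 0 fun _ _ => 1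
  | add {n : ℕ} {u v : E d → E d → ℝ} :
      IsAmplitude σ n u → IsAmplitude σ n v → IsAmplitude σ n fun η ξ => u η ξ + v η ξ
  | sub_mul {k n : ℕ} {f : E d → ℝ} {u : E d → E d → ℝ} (hk : 1 ≤ k) :
      IsSymbol (σ - k) f → IsAmplitude σ n u →
        IsAmplitude σ (k + n) fun η ξ => (f (ξ + η) - f ξ) * u η ξ

namespace IsAmplitude

variable {σ : ℝ} {n : ℕ} {u : E d → E d → ℝ}

lemma isBigO (hσ : σ ≤ 1) (h : IsAmplitude σ n u) :
    (fun p : E d × E d => u p.1 p.2) =O[⊤]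
      fun p => jap p.2 ^ (-(n : ℝ)) * jap p.1 ^ (2 * (n : ℝ)) := by
  induction h with
  | zero n => exact isBigO_zero _ _
  | one => simpa using isBigO_refl (fun _ : E d × E d => (1 : ℝ)) ⊤
  | add _ _ ihu ihv => exact ihu.add ihv
  | @sub_mul k n f u hk hf _ ih =>
    have hk' : (1 : ℝ) ≤ k := by exact_mod_cast hk
    refine ((hf.isBigO_sub_comp_add hk' (by linarith)).mul ih).congr_right fun p => ?_
    push_cast
    rw [neg_add, mul_add, Real.rpow_add (jap_pos _), Real.rpow_add (jap_pos _)]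
    ring

lemma differentiable (h : IsAmplitude σ n u) (η : E d) : Differentiable ℝ (u η) := by
  induction h with
  | zero n => exact differentiable_const 0
  | one => exact differentiable_const 1
  | add _ _ ihu ihv => exact ihu.add ihv
  | sub_mul _ hf _ ih =>
    exact ((hf.differentiable.comp (differentiable_id.add_const η)).sub hf.differentiable).mul ih

lemma pder (h : IsAmplitude σ n u) (i : Fin d) :
    IsAmplitude σ (n + 1) fun η => _root_.pder i (u η) := by
  induction h with
  | zero n => simpa only [pder_const] using zero (n + 1)
  | one => simpa only [pder_const] using zero (0 + 1)
  | add hu hv ihu ihv =>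
    convert ihu.add ihv using 2 with η
    exact funext fun ξ => pder_add i (hu.differentiable η ξ) (hv.differentiable η ξ)
  | @sub_mul k n f u hk hf hu ih =>
    have hf' : IsSymbol (σ - (k + 1 : ℕ)) (_root_.pder i f) := by
      simpa [sub_sub] using hf.pder i
    convert ((by omega : k + 1 + n = k + n + 1) ▸ sub_mul (by omega) hf' hu).add
      ((by omega : k + (n + 1) = k + n + 1) ▸ sub_mul hk hf ih) using 2 with η
    funext ξ
    beta_reduce
    have hdiff : DifferentiableAt ℝ (fun x => f (x + η)) ξ :=
      (hf.differentiable.comp (differentiable_id.add_const η)) ξ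
    rw [pder_mul i (hdiff.fun_sub (hf.differentiable ξ)) (hu.differentiable η ξ),
      pder_sub i hdiff (hf.differentiable ξ), pder_comp_add_right]
    ring

end IsAmplitude

lemma mpder_induction {ι F : Type*} [NormedAddCommGroup F] [NormedSpace ℝ F]
    {P : ℕ → (ι → E d → F) → Prop}
    (hP : ∀ n h (i : Fin d), P n h → P (n + 1) fun a => pder i (h a))
    (β : Fin d → ℕ) {n : ℕ} {h : ι → E d → F} (hh : P n h) :
    P (n + ∑ i, β i) fun a => mpder β (h a) := by
  have hiter (i : Fin d) (k : ℕ) :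
      ∀ n h, P n h → P (n + k) fun a => (pder i)^[k] (h a) := by
    induction k with
    | zero => exact fun n h hh => hh
    | succ k ih =>
      intro n h hh
      simpa only [Function.iterate_succ_apply', ← add_assoc] using hP _ _ i (ih n h hh)
  have hlist (L : List (Fin d)) :
      P (n + (L.map β).sum) fun a => L.foldr (fun i g => (pder i)^[β i] g) (h a) := by
    induction L with
    | nil => simpa using hh
    | cons i L ih =>
      have hsum : n + (L.map β).sum + β i = n + ((i :: L).map β).sum := by
        rw [List.map_cons, List.sum_cons]
        ring
      exact hsum ▸ hiter i (β i) _ _ ih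
  have := hlist (List.finRange d)
  rwa [← Fin.sum_univ_def] at this

lemma pder_mul_exp_sub {φ v : E d → ℝ} {ξ η : E d} (i : Fin d) (hφ : Differentiable ℝ φ)
    (hv : DifferentiableAt ℝ v ξ) :
    pder i (fun x => v x * Real.exp (φ (x + η) - φ x)) ξ
      = (pder i v ξ + (pder i φ (ξ + η) - pder i φ ξ) * v ξ) * Real.exp (φ (ξ + η) - φ ξ) := by
  have hφη : DifferentiableAt ℝ (fun x => φ (x + η)) ξ :=
    (hφ.comp (differentiable_id.add_const η)) ξ
  rw [pder_mul i hv ((hφη.fun_sub (hφ ξ)).exp), pder_exp i (hφη.fun_sub (hφ ξ)),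
    pder_sub i hφη (hφ ξ), pder_comp_add_right]
  ring

lemma exists_isAmplitude_mpder_exp_sub {σ : ℝ} {φ : E d → ℝ} (hφ : IsSymbol σ φ)
    (β : Fin d → ℕ) :
    ∃ v, IsAmplitude σ (∑ i, β i) v ∧ ∀ η, mpder β (fun ξ => Real.exp (φ (ξ + η) - φ ξ))
      = fun ξ => v η ξ * Real.exp (φ (ξ + η) - φ ξ) := by
  have hstep : ∀ n (h : E d → E d → ℝ) (i : Fin d),
      (∃ v, IsAmplitude σ n v ∧ h = fun η ξ => v η ξ * Real.exp (φ (ξ + η) - φ ξ)) →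
      ∃ v, IsAmplitude σ (n + 1) v ∧
        (fun η => pder i (h η)) = fun η ξ => v η ξ * Real.exp (φ (ξ + η) - φ ξ) := by
    rintro n _ i ⟨v, hv, rfl⟩
    have hφ' : IsSymbol (σ - (1 : ℕ)) (pder i φ) := by simpa using hφ.pder i
    refine ⟨_, (hv.pder i).add (add_comm 1 n ▸ hv.sub_mul le_rfl hφ'), ?_⟩
    funext η ξ
    exact pder_mul_exp_sub i hφ.differentiable (hv.differentiable η ξ)
  obtain ⟨v, hv, hmpder⟩ := mpder_induction hstep β (n := 0)
    (h := fun η ξ => Real.exp (φ (ξ + η) - φ ξ)) ⟨fun _ _ => 1, .one, by simp only [one_mul]⟩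
  exact ⟨v, by simpa using hv, fun η => congrFun hmpder η⟩

end

theorem stmt_15_general (σ τ : ℝ) (hσ1 : σ < 1) (d : ℕ) (β : Fin d → ℕ) :
    ∃ C : ℝ, 0 < C ∧
      ∀ ξ η : E d,
        ‖mpder β (fun ξ' => Real.exp (τ * jap (ξ' + η) ^ σ - τ * jap ξ' ^ σ)) ξ‖
          ≤ C * jap ξ ^ (-(∑ i, (β i : ℝ))) * jap η ^ (2 * ∑ i, (β i : ℝ)) *
              Real.exp (τ * jap (ξ + η) ^ σ - τ * jap ξ ^ σ) := by
  obtain ⟨v, hv, hmpder⟩ :=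
    exists_isAmplitude_mpder_exp_sub ((IsSymbol.jap_rpow (d := d) σ).const_mul τ) β
  obtain ⟨C, hC, hbound⟩ := (hv.isBigO hσ1.le).exists_pos
  rw [isBigOWith_top] at hbound
  refine ⟨C, hC, fun ξ η => ?_⟩
  rw [hmpder η, norm_mul, Real.norm_of_nonneg (Real.exp_pos _).le]
  gcongr
  have hweight : 0 ≤ jap ξ ^ (-(∑ i, (β i : ℝ))) * jap η ^ (2 * ∑ i, (β i : ℝ)) :=
    mul_nonneg (Real.rpow_nonneg (jap_pos ξ).le _) (Real.rpow_nonneg (jap_pos η).le _)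
  simpa [mul_assoc, Real.norm_of_nonneg hweight] using hbound (η, ξ)

/-- Derivative bounds for the conjugation weight:
`|∂_ξ^β e^{τ⟨ξ+η⟩^σ − τ⟨ξ⟩^σ}| ≤ C ⟨ξ⟩^{−|β|} ⟨η⟩^{2|β|} e^{τ⟨ξ+η⟩^σ − τ⟨ξ⟩^σ}`. -/
theorem stmt_15 (σ τ : ℝ) (hσ0 : 0 < σ) (hσ1 : σ < 1) (d : ℕ) (β : Fin d → ℕ) :
    ∃ C : ℝ, 0 < C ∧
      ∀ ξ η : E d,
        ‖mpder β (fun ξ' => Real.exp (τ * jap (ξ' + η) ^ σ - τ * jap ξ' ^ σ)) ξ‖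
          ≤ C * jap ξ ^ (-(∑ i, (β i : ℝ))) * jap η ^ (2 * ∑ i, (β i : ℝ)) *
              Real.exp (τ * jap (ξ + η) ^ σ - τ * jap ξ ^ σ) :=
  stmt_15_general σ τ hσ1 d β
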